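/- Let w ∈ W_n with canonical decomposition data (l, α_w, β_w, σ_w), where l = ℓ_t(w). Then ℓ_t(w^{−1}) = ℓ_t(w), α_{w^{−1}} = β_w, β_{w^{−1}} = α_w, and σ_{w^{−1}} = a_l (σ_w)^{−1} a_l. -/

import Mathlib

/-!
Common setup: the Weyl group `W n` of type `B_n`, realized as the group of
permutations `w` of `I_n = {±1, …, ±n}` (inside `Equiv.Perm ℤ`, fixing every
integer of absolute value `> n`) such that `w (-i) = - w i` for all `i`.
-/

namespace TypeB

/-- The generator `t = (1, -1)`. -/
def t : Equiv.Perm ℤ := Equiv.swap 1 (-1)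

/-- The generator `s i = (i, i+1)(-i, -(i+1))` (meaningful for `1 ≤ i`). -/
def s (i : ℕ) : Equiv.Perm ℤ :=
  Equiv.swap (i : ℤ) ((i : ℤ) + 1) * Equiv.swap (-(i : ℤ)) (-((i : ℤ) + 1))

/-- The generating set `S_n = {t, s_1, …, s_{n-1}}`. -/
def gens (n : ℕ) : Set (Equiv.Perm ℤ) :=
  {t} ∪ {x | ∃ i : ℕ, 1 ≤ i ∧ i < n ∧ x = s i}

/-- The Weyl group `W_n` of type `B_n`, as a subgroup of `Equiv.Perm ℤ`:
permutations `w` with `w (-i) = - (w i)` for all `i` and fixing all `i` with `|i| > n`. -/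
def W (n : ℕ) : Subgroup (Equiv.Perm ℤ) where
  carrier := {w | (∀ i : ℤ, w (-i) = - w i) ∧ ∀ i : ℤ, (n : ℤ) < |i| → w i = i}
  one_mem' := ⟨fun _ => rfl, fun _ _ => rfl⟩
  mul_mem' := by
    rintro u v ⟨hu1, hu2⟩ ⟨hv1, hv2⟩
    refine ⟨fun i => ?_, fun i hi => ?_⟩
    · simp only [Equiv.Perm.mul_apply, hv1, hu1]
    · simp only [Equiv.Perm.mul_apply, hv2 i hi, hu2 i hi]
  inv_mem' := by
    rintro u ⟨hu1, hu2⟩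
    refine ⟨fun i => ?_, fun i hi => ?_⟩
    · apply u.injective
      rw [(show ∀ x : ℤ, u (u⁻¹ x) = x from fun x => u.apply_symm_apply x), hu1, (show ∀ x : ℤ, u (u⁻¹ x) = x from fun x => u.apply_symm_apply x)]
    · apply u.injective
      rw [(show ∀ x : ℤ, u (u⁻¹ x) = x from fun x => u.apply_symm_apply x), hu2 i hi]

/-- The length of `w` with respect to the generating set `S_n`. -/
noncomputable def len (n : ℕ) (w : Equiv.Perm ℤ) : ℕ :=
  sInf {k | ∃ l : List (Equiv.Perm ℤ), (∀ x ∈ l, x ∈ gens n) ∧ l.prod = w ∧ l.length = k}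

/-- `l` is a reduced expression for `w` with respect to `S_n`. -/
def IsReduced (n : ℕ) (w : Equiv.Perm ℤ) (l : List (Equiv.Perm ℤ)) : Prop :=
  (∀ x ∈ l, x ∈ gens n) ∧ l.prod = w ∧ l.length = len n w

/-- `ℓ_t w`: the number of occurrences of `t` in a reduced expression of `w`
(independent of the chosen reduced expression). -/
noncomputable def lent (n : ℕ) (w : Equiv.Perm ℤ) : ℕ :=
  letI : DecidableEq (Equiv.Perm ℤ) := Classical.decEq _
  sInf {m | ∃ l, IsReduced n w l ∧ l.count t = m}

/-- `r 1 = t` and `r (i+1) = s i * r i`. -/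
def r : ℕ → Equiv.Perm ℤ
  | 0 => 1
  | 1 => t
  | (i + 2) => s (i + 1) * r (i + 1)

/-- `t_1 = t` and `t_{i+1} = s_i * t_i * s_i`. -/
def tperm : ℕ → Equiv.Perm ℤ
  | 0 => 1
  | 1 => t
  | (i + 2) => s (i + 1) * tperm (i + 1) * s (i + 1)

/-- `a l = r 1 * r 2 * ⋯ * r l`, with `a 0 = 1`. -/
def a : ℕ → Equiv.Perm ℤ
  | 0 => 1
  | (l + 1) => a l * r (l + 1)

/-- The symmetric group `𝔖_n`: the subgroup generated by `s_1, …, s_{n-1}`. -/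
def Sym (n : ℕ) : Subgroup (Equiv.Perm ℤ) :=
  Subgroup.closure {x | ∃ i : ℕ, 1 ≤ i ∧ i < n ∧ x = s i}

/-- The parabolic subgroup `𝔖_{l,n-l}`: generated by `{s_1, …, s_{n-1}} \ {s_l}`. -/
def SymP (n l : ℕ) : Subgroup (Equiv.Perm ℤ) :=
  Subgroup.closure {x | ∃ i : ℕ, 1 ≤ i ∧ i < n ∧ i ≠ l ∧ x = s i}

/-- `Y_{l,n-l}`: elements of `𝔖_n` of minimal length in their coset `w 𝔖_{l,n-l}`. -/
def Y (n l : ℕ) : Set (Equiv.Perm ℤ) :=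
  {w | w ∈ Sym n ∧ ∀ u ∈ SymP n l, len n w ≤ len n (w * u)}

/-- The subgroup `𝔖_{[i,j]}` generated by `s_i, …, s_{j-1}`. -/
def SymI (i j : ℕ) : Subgroup (Equiv.Perm ℤ) :=
  Subgroup.closure {x | ∃ k : ℕ, i ≤ k ∧ k < j ∧ x = s k}

/-- The function reversing the interval `[i,j]` (and `[-j,-i]`), for `1 ≤ i`. -/
def revFun (i j : ℤ) : ℤ → ℤ := fun k =>
  if 1 ≤ i ∧ i ≤ k ∧ k ≤ j then i + j - k
  else if 1 ≤ i ∧ -j ≤ k ∧ k ≤ -i then -(i + j) - k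
  else k

lemma revFun_involutive (i j : ℤ) : Function.Involutive (revFun i j) := by
  intro k
  unfold revFun
  split_ifs <;> omega

/-- `σ_{[i,j]}`: the longest element of `𝔖_{[i,j]}`, i.e. the order-reversing
permutation of the interval `[i,j]` (extended to `I_n` by `w(-k) = -w(k)`). -/
def sigmaI (i j : ℕ) : Equiv.Perm ℤ := (revFun_involutive (i : ℤ) (j : ℤ)).toPerm

/-- `σ_{l,n-l}`: the longest element of `𝔖_{l,n-l} = 𝔖_{[1,l]} × 𝔖_{[l+1,n]}`. -/
def sigmaLL (n l : ℕ) : Equiv.Perm ℤ := sigmaI 1 l * sigmaI (l + 1) n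

/-- The function negating all `k` with `|k| ≤ n`. -/
def negnFun (n : ℤ) : ℤ → ℤ := fun k => if -n ≤ k ∧ k ≤ n then -k else k

lemma negnFun_involutive (n : ℤ) : Function.Involutive (negnFun n) := by
  intro k
  unfold negnFun
  split_ifs <;> omega

/-- `w_n`: the longest element of `W_n`; as a permutation, `w_n i = -i` for `|i| ≤ n`. -/
def wlong (n : ℕ) : Equiv.Perm ℤ := (negnFun_involutive (n : ℤ)).toPerm

/-- `c_I = s_{i_1} s_{i_2} ⋯ s_{i_k}` for `I = {i_1 < i_2 < ⋯ < i_k}`. -/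
def cElt (I : Finset ℕ) : Equiv.Perm ℤ := ((I.sort (· ≤ ·)).map s).prod

/-- `d_I = s_{i_k} ⋯ s_{i_2} s_{i_1}` for `I = {i_1 < i_2 < ⋯ < i_k}`. -/
def dElt (I : Finset ℕ) : Equiv.Perm ℤ := (((I.sort (· ≤ ·)).map s).reverse).prod

/-- `X_n^{(m)}`: elements of `W_n` of minimal length in their coset `w W_m`. -/
def X (n m : ℕ) : Set (Equiv.Perm ℤ) :=
  {w | w ∈ W n ∧ ∀ u ∈ W m, len n w ≤ len n (w * u)}

/-- Bruhat order: `x ≤ y` iff some reduced expression of `y` contains a subword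
which is a reduced expression of `x`. -/
def BruhatLE (n : ℕ) (x y : Equiv.Perm ℤ) : Prop :=
  ∃ ly, IsReduced n y ly ∧ ∃ lx, lx.Sublist ly ∧ IsReduced n x lx

/-- Strict Bruhat order. -/
def BruhatLT (n : ℕ) (x y : Equiv.Perm ℤ) : Prop := BruhatLE n x y ∧ x ≠ y

/-- `D_i(W_n)`: the set of `x` such that exactly one of `s_i, s_{i+1}` is a
(right) descent of `x`. -/
def Dset (n i : ℕ) : Set (Equiv.Perm ℤ) :=
  {x | Xor' (len n (x * s i) < len n x) (len n (x * s (i + 1)) < len n x)}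

open Classical in
/-- `γ_i x`: the unique element of `{x s_i, x s_{i+1}} ∩ D_i(W_n)` (for `x ∈ D_i(W_n)`). -/
noncomputable def gamma (n i : ℕ) (x : Equiv.Perm ℤ) : Equiv.Perm ℤ :=
  if x * s i ∈ Dset n i then x * s i else x * s (i + 1)

/-- `E_m^{(r)}`: the set of `w ∈ W_m` such that `|w 1| > |w i|` for `2 ≤ i ≤ r+2`
and `(w 2, …, w (r+2))` is a shuffle of a positive decreasing sequence and a
negative increasing sequence. -/
def E (m ρ : ℕ) : Set (Equiv.Perm ℤ) :=
  {w | w ∈ W m ∧ (∀ i : ℕ, 2 ≤ i → i ≤ ρ + 2 → |w (i : ℤ)| < |w (1 : ℤ)|) ∧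
    ∀ i j : ℕ, 2 ≤ i → i < j → j ≤ ρ + 2 →
      (0 < w (i : ℤ) → 0 < w (j : ℤ) → w (j : ℤ) < w (i : ℤ)) ∧
      (w (i : ℤ) < 0 → w (j : ℤ) < 0 → w (i : ℤ) < w (j : ℤ))}

/-- The product `r_{i_1} ⋯ r_{i_l}` for a sequence `i : Fin l → ℕ`. -/
def prodR {l : ℕ} (i : Fin l → ℕ) : Equiv.Perm ℤ := (List.ofFn fun k => r (i k)).prod

/-- `(l, α, β, σ)` is a decomposition of `w` as in the decomposition lemma:
`l ≤ n`, `α, β ∈ Y_{l,n-l}`, `σ ∈ 𝔖_{l,n-l}` and `w = α a_l σ β⁻¹`. -/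
def IsDecomp (n : ℕ) (w : Equiv.Perm ℤ) (l : ℕ) (α β σ : Equiv.Perm ℤ) : Prop :=
  l ≤ n ∧ α ∈ Y n l ∧ β ∈ Y n l ∧ σ ∈ SymP n l ∧ w = α * a l * σ * β⁻¹

/-!
Every generator in `S_n` is an involution, so reversing a reduced word for `w` gives a reduced
word for `w⁻¹` with the same number of letters `t`; hence `ℓ_t(w⁻¹) = ℓ_t(w)`.
Since `a_l` is an involution, inverting `w = α a_l σ β⁻¹` gives `w⁻¹ = β a_l (a_l σ⁻¹ a_l) α⁻¹`.
On `±[1, l]` the element `a_l` acts as `k ↦ k - l - 1`, so conjugation by `a_l` sends `s_i`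
to `s_{l-i}` for `i < l` and fixes `s_i` for `i > l`: it preserves `𝔖_{l,n-l}`.
-/

lemma _root_.Subgroup.conj_mem_closure {G : Type*} [Group G] {S : Set G} {g : G}
    (hS : ∀ x ∈ S, g * x * g⁻¹ ∈ S) {x : G} (hx : x ∈ Subgroup.closure S) :
    g * x * g⁻¹ ∈ Subgroup.closure S := by
  have hmap : (Subgroup.closure S).map (MulAut.conj g).toMonoidHom ≤ Subgroup.closure S := by
    rw [MonoidHom.map_closure]
    exact Subgroup.closure_mono (by rintro _ ⟨y, hy, rfl⟩; exact hS y hy)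
  exact hmap ⟨x, hx, rfl⟩

lemma s_apply_spec {i : ℕ} (hi : 1 ≤ i) (k : ℤ) :
    (k = i → s i k = i + 1) ∧ (k = i + 1 → s i k = i) ∧
    (k = -i → s i k = -(i + 1)) ∧ (k = -(i + 1) → s i k = -i) ∧
    (k ≠ i → k ≠ i + 1 → k ≠ -i → k ≠ -(i + 1) → s i k = k) := by
  simp only [s, Equiv.Perm.mul_apply, Equiv.swap_apply_def]
  split_ifs <;> refine ⟨fun _ => ?_, fun _ => ?_, fun _ => ?_, fun _ => ?_, fun _ _ _ _ => ?_⟩ <;>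
    omega

lemma s_mul_self {i : ℕ} (hi : 1 ≤ i) : s i * s i = 1 := by
  ext k
  have := s_apply_spec hi k
  have := s_apply_spec hi (s i k)
  simp only [Equiv.Perm.mul_apply, Equiv.Perm.one_apply]
  omega

lemma inv_eq_self_of_mem_gens {n : ℕ} {x : Equiv.Perm ℤ} (hx : x ∈ gens n) : x⁻¹ = x := by
  rcases hx with hx | ⟨i, hi, -, rfl⟩
  · rw [Set.mem_singleton_iff.mp hx, t, Equiv.swap_inv]
  · exact inv_eq_of_mul_eq_one_right (s_mul_self hi)

lemma prod_reverse_of_mem_gens {n : ℕ} {L : List (Equiv.Perm ℤ)} (hL : ∀ x ∈ L, x ∈ gens n) :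
    L.reverse.prod = L.prod⁻¹ := by
  rw [List.prod_inv_reverse, List.map_congr_left (fun x hx => inv_eq_self_of_mem_gens (hL x hx)),
    List.map_id']

lemma exists_word_inv {n k : ℕ} {w : Equiv.Perm ℤ}
    (h : ∃ L : List (Equiv.Perm ℤ), (∀ x ∈ L, x ∈ gens n) ∧ L.prod = w ∧ L.length = k) :
    ∃ L : List (Equiv.Perm ℤ), (∀ x ∈ L, x ∈ gens n) ∧ L.prod = w⁻¹ ∧ L.length = k := by
  obtain ⟨L, hL, rfl, rfl⟩ := h
  exact ⟨L.reverse, fun x hx => hL x (List.mem_reverse.mp hx), prod_reverse_of_mem_gens hL,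
    L.length_reverse⟩

lemma len_inv (n : ℕ) (w : Equiv.Perm ℤ) : len n w⁻¹ = len n w := by
  unfold len
  congr 1
  ext k
  exact ⟨fun h => inv_inv w ▸ exists_word_inv h, exists_word_inv⟩

lemma IsReduced.reverse {n : ℕ} {w : Equiv.Perm ℤ} {L : List (Equiv.Perm ℤ)}
    (h : IsReduced n w L) : IsReduced n w⁻¹ L.reverse := by
  obtain ⟨hL, rfl, hlen⟩ := h
  exact ⟨fun x hx => hL x (List.mem_reverse.mp hx), prod_reverse_of_mem_gens hL,
    by rw [List.length_reverse, hlen, len_inv]⟩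

lemma lent_inv (n : ℕ) (w : Equiv.Perm ℤ) : lent n w⁻¹ = lent n w := by
  classical
  have hrev : ∀ (v : Equiv.Perm ℤ) (m : ℕ), (∃ L, IsReduced n v L ∧ L.count t = m) →
      ∃ L, IsReduced n v⁻¹ L ∧ L.count t = m := by
    rintro v m ⟨L, hL, rfl⟩
    exact ⟨L.reverse, hL.reverse, List.count_reverse⟩
  unfold lent
  congr 1
  ext m
  exact ⟨fun h => inv_inv w ▸ hrev _ m h, hrev w m⟩

lemma r_apply_spec (m : ℕ) (k : ℤ) :
    (1 ≤ m → k = 1 → r m k = -m) ∧ (2 ≤ k → k ≤ m → r m k = k - 1) ∧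
    (1 ≤ m → k = -1 → r m k = m) ∧ (-m ≤ k → k ≤ -2 → r m k = k + 1) ∧
    (k = 0 ∨ m < k ∨ k < -m → r m k = k) := by
  induction m generalizing k with
  | zero =>
    rw [show r 0 = 1 from rfl, Equiv.Perm.one_apply]
    refine ⟨?_, ?_, ?_, ?_, ?_⟩ <;> intros <;> omega
  | succ m ih =>
    rcases m with _ | m
    · simp only [r, t, Equiv.swap_apply_def]
      split_ifs <;> omega
    · rw [show r (m + 2) = s (m + 1) * r (m + 1) from rfl, Equiv.Perm.mul_apply]
      have := ih k
      have := s_apply_spec (i := m + 1) (by omega) (r (m + 1) k)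
      refine ⟨?_, ?_, ?_, ?_, ?_⟩ <;> intros <;> omega

lemma a_apply_spec (l : ℕ) (k : ℤ) :
    (1 ≤ k → k ≤ l → a l k = k - l - 1) ∧ (-l ≤ k → k ≤ -1 → a l k = k + l + 1) ∧
    (k = 0 ∨ l < k ∨ k < -l → a l k = k) := by
  induction l generalizing k with
  | zero =>
    rw [show a 0 = 1 from rfl, Equiv.Perm.one_apply]
    refine ⟨?_, ?_, ?_⟩ <;> intros <;> omega
  | succ l ih =>
    rw [show a (l + 1) = a l * r (l + 1) from rfl, Equiv.Perm.mul_apply]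
    have := r_apply_spec (l + 1) k
    have := ih (r (l + 1) k)
    refine ⟨?_, ?_, ?_⟩ <;> intros <;> omega

lemma a_mul_self (l : ℕ) : a l * a l = 1 := by
  ext k
  have := a_apply_spec l k
  have := a_apply_spec l (a l k)
  simp only [Equiv.Perm.mul_apply, Equiv.Perm.one_apply]
  omega

lemma a_inv (l : ℕ) : (a l)⁻¹ = a l := inv_eq_of_mul_eq_one_right (a_mul_self l)

lemma a_mul_s_mul_a_of_lt {l i : ℕ} (hi : 1 ≤ i) (hil : i < l) : a l * s i * a l = s (l - i) := by
  ext k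
  have := a_apply_spec l k
  have := s_apply_spec hi (a l k)
  have := a_apply_spec l (s i (a l k))
  have := s_apply_spec (show 1 ≤ l - i by omega) k
  simp only [Equiv.Perm.mul_apply]
  omega

lemma a_mul_s_mul_a_of_gt {l i : ℕ} (hil : l < i) : a l * s i * a l = s i := by
  ext k
  have := a_apply_spec l k
  have := s_apply_spec (show 1 ≤ i by omega) (a l k)
  have := a_apply_spec l (s i (a l k))
  have := s_apply_spec (show 1 ≤ i by omega) k
  simp only [Equiv.Perm.mul_apply]
  omega

lemma a_mul_mul_a_mem_symP {n l : ℕ} (hln : l ≤ n) {σ : Equiv.Perm ℤ} (hσ : σ ∈ SymP n l) :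
    a l * σ * a l ∈ SymP n l := by
  have hconj := Subgroup.conj_mem_closure (g := a l) ?_ hσ
  · rwa [a_inv] at hconj
  · rintro _ ⟨i, hi, hin, hil, rfl⟩
    rw [a_inv]
    rcases lt_or_gt_of_ne hil with h | h
    · exact ⟨l - i, by omega, by omega, by omega, a_mul_s_mul_a_of_lt hi h⟩
    · exact ⟨i, hi, hin, hil, a_mul_s_mul_a_of_gt h⟩

theorem stmt4_general (n : ℕ) (w : Equiv.Perm ℤ)
    (l : ℕ) (α β σ : Equiv.Perm ℤ) (hdec : IsDecomp n w l α β σ) :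
    lent n w⁻¹ = lent n w ∧ IsDecomp n w⁻¹ l β α (a l * σ⁻¹ * a l) := by
  obtain ⟨hln, hα, hβ, hσ, rfl⟩ := hdec
  refine ⟨lent_inv n _, hln, hβ, hα, a_mul_mul_a_mem_symP hln (inv_mem hσ), ?_⟩
  calc (α * a l * σ * β⁻¹)⁻¹ = β * σ⁻¹ * a l * α⁻¹ := by
        simp only [mul_inv_rev, inv_inv, a_inv, mul_assoc]
    _ = β * a l * (a l * σ⁻¹ * a l) * α⁻¹ := by
      simp only [mul_assoc, ← mul_assoc (a l) (a l), a_mul_self, one_mul]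

/-- if `w = α a_l σ β⁻¹` is the canonical decomposition of `w`
(`l = ℓ_t(w)`), then `ℓ_t(w⁻¹) = ℓ_t(w)` and the canonical decomposition of
`w⁻¹` is `w⁻¹ = β a_l (a_l σ⁻¹ a_l) α⁻¹`, i.e. `α_{w⁻¹} = β_w`, `β_{w⁻¹} = α_w`
and `σ_{w⁻¹} = a_l σ_w⁻¹ a_l`. -/
theorem stmt4 (n : ℕ) (w : Equiv.Perm ℤ) (hw : w ∈ W n)
    (l : ℕ) (α β σ : Equiv.Perm ℤ) (hdec : IsDecomp n w l α β σ) (hl : l = lent n w) :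
    lent n w⁻¹ = lent n w ∧ IsDecomp n w⁻¹ l β α (a l * σ⁻¹ * a l) :=
  stmt4_general n w l α β σ hdec

end TypeB
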